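/- Euler's pentagonal number theorem in split form: (q;q)_∞ = Σ_{τ=0}^∞ (-1)^τ q^(τ(3τ+1)/2) − Σ_{τ=0}^∞ (-1)^τ q^(τ(3τ+5)/2 + 1), as formal power series. -/

import Mathlib

open PowerSeries

/-- The infinite sum of a sequence of formal power series whose `τ`-th term has
`X`-order at least `τ`: the `k`-th coefficient is that of the partial sum of
the first `k+1` terms. -/
noncomputable def isum (f : ℕ → PowerSeries ℚ) : PowerSeries ℚ :=
  PowerSeries.mk fun k => PowerSeries.coeff k (∑ i ∈ Finset.range (k + 1), f i)

/-- The infinite product of a sequence of formal power series whose `n`-th factor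
is `1 + O(X^(n+1))`: the `k`-th coefficient is that of the partial product of
the first `k+1` factors. -/
noncomputable def iprod (f : ℕ → PowerSeries ℚ) : PowerSeries ℚ :=
  PowerSeries.mk fun k => PowerSeries.coeff k (∏ i ∈ Finset.range (k + 1), f i)

/-- The finite `q`-Pochhammer symbol `(q^a; q^m)_t = ∏_{i=0}^{t-1} (1 - q^(a+mi))`. -/
noncomputable def poch (a m t : ℕ) : PowerSeries ℚ :=
  ∏ i ∈ Finset.range t, (1 - (X : PowerSeries ℚ) ^ (a + m * i))

/-- The infinite `q`-Pochhammer symbol `(q^a; q^m)_∞ = ∏_{n≥0} (1 - q^(a+mn))` (`a ≥ 1`). -/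
noncomputable def pochInf (a m : ℕ) : PowerSeries ℚ :=
  iprod fun n => 1 - (X : PowerSeries ℚ) ^ (a + m * n)

/-- The infinite `q`-Pochhammer symbol `(-q^a; q^m)_∞ = ∏_{n≥0} (1 + q^(a+mn))` (`a ≥ 1`). -/
noncomputable def pochNegInf (a m : ℕ) : PowerSeries ℚ :=
  iprod fun n => 1 + (X : PowerSeries ℚ) ^ (a + m * n)


/-- `(q)_n / (q)_j = ∏_{k=j+1}^{n} (1 - q^k)`. -/
noncomputable def dd (j n : ℕ) : PowerSeries ℚ :=
  ∏ k ∈ Finset.Ico (j+1) (n+1), (1 - (X : PowerSeries ℚ) ^ k)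

/-- Shanks's sum. -/
noncomputable def TT (n : ℕ) : PowerSeries ℚ :=
  ∑ j ∈ Finset.range (n+1), (-1 : PowerSeries ℚ) ^ j * X ^ (n*j + j*(j+1)/2) * dd j n

lemma dd_self (n : ℕ) : dd n n = 1 := by
  simp [dd]

lemma dd_step {j n : ℕ} (h : j < n) : dd j n = (1 - X ^ (j+1)) * dd (j+1) n := by
  rw [dd, Finset.prod_eq_prod_Ico_succ_bot (by omega)]
  rfl

lemma dd_top {j n : ℕ} (h : j ≤ n) : dd j (n+1) = dd j n * (1 - X ^ (n+1)) := by
  rw [dd, Finset.prod_Ico_succ_top (by omega)]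
  rfl

lemma tri_succ (j : ℕ) : (j+1)*(j+2)/2 = j*(j+1)/2 + (j+1) := by
  rw [show (j+1)*(j+2) = j*(j+1) + (j+1)*2 by ring]
  generalize j*(j+1) = a
  omega

/-- Per-term pairing identity: `u j = v (j+1) - w (j+1)` for `j < n`. -/
lemma pair {n j : ℕ} (h : j < n) :
    (-1 : PowerSeries ℚ) ^ j * X ^ ((n+1)*j + j*(j+1)/2 + (n+1)) * dd j n
      = (-1 : PowerSeries ℚ) ^ (j+1) * X ^ ((n+1)*(j+1) + (j+1)*((j+1)+1)/2) * dd (j+1) n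
        - (-1 : PowerSeries ℚ) ^ (j+1) * X ^ (n*(j+1) + (j+1)*((j+1)+1)/2) * dd (j+1) n := by
  have e1 : (n+1)*(j+1) + (j+1)*((j+1)+1)/2 = ((n+1)*j + j*(j+1)/2 + (n+1)) + (j+1) := by
    rw [show (j+1)+1 = j+2 from rfl, tri_succ]
    generalize j*(j+1)/2 = a
    ring
  have e2 : n*(j+1) + (j+1)*((j+1)+1)/2 = (n+1)*j + j*(j+1)/2 + (n+1) := by
    rw [show (j+1)+1 = j+2 from rfl, tri_succ]
    generalize j*(j+1)/2 = a
    ring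
  rw [e1, e2, dd_step h, pow_add, pow_succ]
  ring

/-- Telescoping step for Shanks's sum. -/
lemma TT_succ (n : ℕ) :
    TT (n+1) = TT n + (-1 : PowerSeries ℚ) ^ (n+1) *
      (X ^ ((n+1)*(3*n+2)/2) + X ^ ((n+1)*(3*n+4)/2)) := by
  have etop : (n+1)*(n+1) + (n+1)*((n+1)+1)/2 = (n+1)*(3*n+4)/2 := by
    rw [show (n+1)*(3*n+4) = (n+1)*((n+1)+1) + ((n+1)*(n+1))*2 by ring,
      Nat.add_mul_div_right _ _ (by norm_num : (0:ℕ) < 2)]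
    omega
  have eun : (n+1)*n + n*(n+1)/2 + (n+1) = (n+1)*(3*n+2)/2 := by
    rw [show (n+1)*(3*n+2) = n*(n+1) + ((n+1)*n + (n+1))*2 by ring,
      Nat.add_mul_div_right _ _ (by norm_num : (0:ℕ) < 2)]
    generalize n*(n+1)/2 = a
    ring
  -- the three sums
  set V : PowerSeries ℚ :=
    ∑ j ∈ Finset.range (n+1), (-1 : PowerSeries ℚ) ^ j * X ^ ((n+1)*j + j*(j+1)/2) * dd j n with hV
  set U : PowerSeries ℚ :=
    ∑ j ∈ Finset.range (n+1),
      (-1 : PowerSeries ℚ) ^ j * X ^ ((n+1)*j + j*(j+1)/2 + (n+1)) * dd j n with hU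
  have step1 : TT (n+1) = V - U + (-1 : PowerSeries ℚ) ^ (n+1) * X ^ ((n+1)*(3*n+4)/2) := by
    rw [TT, Finset.sum_range_succ, dd_self, etop, mul_one]
    congr 1
    rw [hV, hU, ← Finset.sum_sub_distrib]
    refine Finset.sum_congr rfl fun j hj => ?_
    have hj' : j ≤ n := by simpa using Nat.lt_succ_iff.mp (Finset.mem_range.mp hj)
    rw [dd_top hj', pow_add]
    ring
  have step2 : U = V - TT n + (-1 : PowerSeries ℚ) ^ n * X ^ ((n+1)*(3*n+2)/2) := by
    rw [hU, Finset.sum_range_succ, dd_self, eun, mul_one]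
    congr 1
    have hsum : ∑ j ∈ Finset.range n,
        (-1 : PowerSeries ℚ) ^ j * X ^ ((n+1)*j + j*(j+1)/2 + (n+1)) * dd j n
        = ∑ j ∈ Finset.range n,
            ((-1 : PowerSeries ℚ) ^ (j+1) * X ^ ((n+1)*(j+1) + (j+1)*((j+1)+1)/2) * dd (j+1) n
              - (-1 : PowerSeries ℚ) ^ (j+1) * X ^ (n*(j+1) + (j+1)*((j+1)+1)/2) * dd (j+1) n) :=
      Finset.sum_congr rfl fun j hj => pair (Finset.mem_range.mp hj)
    rw [hsum, Finset.sum_sub_distrib]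
    have hVsplit : V = (∑ j ∈ Finset.range n,
        (-1 : PowerSeries ℚ) ^ (j+1) * X ^ ((n+1)*(j+1) + (j+1)*((j+1)+1)/2) * dd (j+1) n)
          + (-1 : PowerSeries ℚ) ^ 0 * X ^ ((n+1)*0 + 0*(0+1)/2) * dd 0 n := by
      rw [hV, Finset.sum_range_succ']
    have hWsplit : TT n = (∑ j ∈ Finset.range n,
        (-1 : PowerSeries ℚ) ^ (j+1) * X ^ (n*(j+1) + (j+1)*((j+1)+1)/2) * dd (j+1) n)
          + (-1 : PowerSeries ℚ) ^ 0 * X ^ (n*0 + 0*(0+1)/2) * dd 0 n := by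
      rw [TT, Finset.sum_range_succ']
    rw [hVsplit, hWsplit]
    norm_num
  rw [step1, step2, pow_succ]
  ring

/-- Shanks's identity, split form. -/
lemma shanks (n : ℕ) :
    TT n = ∑ m ∈ Finset.range (n+1), (-1 : PowerSeries ℚ) ^ m * X ^ (m*(3*m+1)/2)
      - ∑ m ∈ Finset.range n, (-1 : PowerSeries ℚ) ^ m * X ^ (m*(3*m+5)/2 + 1) := by
  induction n with
  | zero => simp [TT, dd_self]
  | succ n ih =>
    rw [TT_succ, ih,
      Finset.sum_range_succ (f := fun m => (-1 : PowerSeries ℚ) ^ m * X ^ (m*(3*m+1)/2)) (n := n+1),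
      Finset.sum_range_succ (f := fun m => (-1 : PowerSeries ℚ) ^ m * X ^ (m*(3*m+5)/2 + 1))]
    have e1 : (n+1)*(3*(n+1)+1)/2 = (n+1)*(3*n+4)/2 := by ring_nf
    have e2 : n*(3*n+5)/2 + 1 = (n+1)*(3*n+2)/2 := by
      rw [show (n+1)*(3*n+2) = n*(3*n+5) + 1*2 by ring,
        Nat.add_mul_div_right _ _ (by norm_num : (0:ℕ) < 2)]
    rw [e1, e2, pow_succ]
    ring

lemma coeff_term_zero {k e : ℕ} (h : k < e) (f g : PowerSeries ℚ) :
    (PowerSeries.coeff k) (f * X ^ e * g) = 0 := by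
  rw [show f * X ^ e * g = (f * g) * X ^ e by ring, PowerSeries.coeff_mul_X_pow']
  simp [Nat.not_le.mpr h]

/-- Euler's pentagonal number theorem in split form:
`(q;q)_∞ = Σ_{τ≥0} (-1)^τ q^(τ(3τ+1)/2) − Σ_{τ≥0} (-1)^τ q^(τ(3τ+5)/2+1)`. -/
theorem stmt18 :
    pochInf 1 1 =
      isum (fun τ => (-1 : PowerSeries ℚ) ^ τ * X ^ (τ * (3 * τ + 1) / 2)) -
        isum (fun τ => (-1 : PowerSeries ℚ) ^ τ * X ^ (τ * (3 * τ + 5) / 2 + 1)) := by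
  have hprod : ∀ k : ℕ,
      (∏ i ∈ Finset.range (k+1), (1 - (X : PowerSeries ℚ) ^ (1 + 1 * i))) = dd 0 (k+1) := by
    intro k
    rw [dd, Finset.prod_Ico_eq_prod_range]
    norm_num
  have hcoeffL : ∀ k, (PowerSeries.coeff k) (dd 0 (k+1)) = (PowerSeries.coeff k) (TT (k+1)) := by
    intro k
    rw [TT, Finset.sum_range_succ', map_add, map_sum]
    have hz : ∀ j ∈ Finset.range (k+1),
        (PowerSeries.coeff k) ((-1 : PowerSeries ℚ) ^ (j+1) *
          X ^ ((k+1)*(j+1) + (j+1)*((j+1)+1)/2) * dd (j+1) (k+1)) = 0 := by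
      intro j hj
      apply coeff_term_zero
      have : k + 1 ≤ (k+1)*(j+1) := Nat.le_mul_of_pos_right _ (by omega)
      omega
    rw [Finset.sum_eq_zero hz, zero_add]
    norm_num
  apply PowerSeries.ext
  intro k
  rw [pochInf, iprod, map_sub, isum, isum, PowerSeries.coeff_mk, PowerSeries.coeff_mk,
    PowerSeries.coeff_mk, hprod k, hcoeffL k, shanks (k+1), map_sub]
  congr 1
  rw [Finset.sum_range_succ, map_add]
  have h0 : (PowerSeries.coeff k)
      ((-1 : PowerSeries ℚ) ^ (k+1) * X ^ ((k+1)*(3*(k+1)+1)/2)) = 0 := by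
    rw [PowerSeries.coeff_mul_X_pow']
    have h2 : k + 1 ≤ (k+1)*(3*(k+1)+1)/2 := by
      calc k + 1 = (k+1)*2/2 := by omega
        _ ≤ _ := Nat.div_le_div_right (Nat.mul_le_mul_left _ (by omega))
    rw [if_neg (by omega)]
  rw [h0, add_zero]
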